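/- Let G, H, K be groupoids, Q a bi-principal (G,H)-bibundle and Q' a bi-principal (H,K)-bibundle (in the set-theoretic sense). Then the quotient (Q ×_{H⁰} Q')/H of the fibre product by the diagonal H-action, with the induced G- and K-actions, is a bi-principal (G,K)-bibundle. -/

import Mathlib

open CategoryTheory

/-- A bi-principal `(G,H)`-bibundle (Morita equivalence) in the set-theoretic sense:
a set `Q` with moment maps `p : Q → G⁰`, `q : Q → H⁰`, a left `G`-action along `p` and a
right `H`-action along `q`, the actions commuting, both moment maps surjective, the left
action free and transitive on the fibres of `q`, and the right action free and transitive
on the fibres of `p`. -/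
structure Bibundle (G H : Type*) [CategoryTheory.Groupoid G] [CategoryTheory.Groupoid H]
    (Q : Type*) where
  /-- moment map for the left `G`-action -/
  p : Q → G
  /-- moment map for the right `H`-action -/
  q : Q → H
  /-- left action: an arrow `g : p z ⟶ y` of `G` acts on `z` -/
  lact : (z : Q) → {y : G} → (p z ⟶ y) → Q
  p_lact : ∀ (z : Q) {y : G} (g : p z ⟶ y), p (lact z g) = y
  q_lact : ∀ (z : Q) {y : G} (g : p z ⟶ y), q (lact z g) = q z
  lact_id : ∀ z : Q, lact z (𝟙 (p z)) = z
  lact_comp : ∀ (z : Q) {y y' : G} (g : p z ⟶ y) (g' : y ⟶ y'),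
    lact (lact z g) (CategoryTheory.eqToHom (p_lact z g) ≫ g') = lact z (g ≫ g')
  /-- right action: an arrow `h : x ⟶ q z` of `H` acts on `z` (by "precomposition") -/
  ract : (z : Q) → {x : H} → (x ⟶ q z) → Q
  q_ract : ∀ (z : Q) {x : H} (h : x ⟶ q z), q (ract z h) = x
  p_ract : ∀ (z : Q) {x : H} (h : x ⟶ q z), p (ract z h) = p z
  ract_id : ∀ z : Q, ract z (𝟙 (q z)) = z
  ract_comp : ∀ (z : Q) {x x' : H} (h : x ⟶ q z) (h' : x' ⟶ x),
    ract (ract z h) (h' ≫ CategoryTheory.eqToHom (q_ract z h).symm) = ract z (h' ≫ h)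
  /-- the two actions commute -/
  comm : ∀ (z : Q) {y : G} (g : p z ⟶ y) {x : H} (h : x ⟶ q z),
    lact (ract z h) (CategoryTheory.eqToHom (p_ract z h) ≫ g)
      = ract (lact z g) (h ≫ CategoryTheory.eqToHom (q_lact z g).symm)
  p_surj : Function.Surjective p
  q_surj : Function.Surjective q
  /-- the left action is free -/
  lfree : ∀ (z : Q) {y : G} (g g' : p z ⟶ y), lact z g = lact z g' → g = g'
  /-- the left action is transitive on the fibres of `q` -/
  ltrans : ∀ z z' : Q, q z = q z' → ∃ g : p z ⟶ p z', lact z g = z'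
  /-- the right action is free -/
  rfree : ∀ (z : Q) {x : H} (h h' : x ⟶ q z), ract z h = ract z h' → h = h'
  /-- the right action is transitive on the fibres of `p` -/
  rtrans : ∀ z z' : Q, p z = p z' → ∃ h : q z' ⟶ q z, ract z h = z'

variable {G H K : Type*} [Groupoid G] [Groupoid H] [Groupoid K] {Q Q' : Type*}

/-- The fibre product `Q ×_{H⁰} Q'` of a `(G,H)`-bibundle and an `(H,K)`-bibundle over the
intermediate object set `H⁰`. -/
def FibProd (B1 : Bibundle G H Q) (B2 : Bibundle H K Q') : Type _ :=
  {w : Q × Q' // B1.q w.1 = B2.p w.2}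

/-- The diagonal `H`-action relation on the fibre product: `(z, z') ∼ (z • h, h⁻¹ • z')`. -/
def diagRel (B1 : Bibundle G H Q) (B2 : Bibundle H K Q') :
    FibProd B1 B2 → FibProd B1 B2 → Prop := fun w w' =>
  ∃ (x : H) (h : x ⟶ B1.q w.val.1),
    w'.val = (B1.ract w.val.1 h,
      B2.lact w.val.2 (eqToHom w.prop.symm ≫ Groupoid.inv h))


section Helpers

namespace Bibundle

variable {C D : Type*} [Groupoid C] [Groupoid D] {X : Type*} (B : Bibundle C D X)

theorem lact_heq {z z' : X} (hz : z = z') {y y' : C} (hy : y = y')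
    {g : B.p z ⟶ y} {g' : B.p z' ⟶ y'} (hg : HEq g g') : B.lact z g = B.lact z' g' := by
  subst hz; subst hy; rw [eq_of_heq hg]

theorem ract_heq {z z' : X} (hz : z = z') {x x' : D} (hx : x = x')
    {h : x ⟶ B.q z} {h' : x' ⟶ B.q z'} (hh : HEq h h') : B.ract z h = B.ract z' h' := by
  subst hz; subst hx; rw [eq_of_heq hh]

theorem lact_eqToHom (z : X) {c : C} (e : B.p z = c) : B.lact z (eqToHom e) = z := by
  subst e; simpa using B.lact_id z

theorem ract_eqToHom (z : X) {c : D} (e : c = B.q z) : B.ract z (eqToHom e) = z := by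
  subst e; simpa using B.ract_id z

theorem lact_lact (z : X) {y y' : C} (g : B.p z ⟶ y) (b : B.p (B.lact z g) ⟶ y') :
    B.lact (B.lact z g) b = B.lact z (g ≫ eqToHom (B.p_lact z g).symm ≫ b) := by
  have := B.lact_comp z g (eqToHom (B.p_lact z g).symm ≫ b)
  simpa using this

theorem ract_ract (z : X) {x x' : D} (h : x ⟶ B.q z) (b : x' ⟶ B.q (B.ract z h)) :
    B.ract (B.ract z h) b = B.ract z ((b ≫ eqToHom (B.q_ract z h)) ≫ h) := by
  have := B.ract_comp z h (b ≫ eqToHom (B.q_ract z h))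
  simpa using this

theorem comm' (z : X) {x : D} (h : x ⟶ B.q z) {y : C} (c : B.p (B.ract z h) ⟶ y) :
    B.lact (B.ract z h) c
      = B.ract (B.lact z (eqToHom (B.p_ract z h).symm ≫ c))
          (h ≫ eqToHom (B.q_lact z (eqToHom (B.p_ract z h).symm ≫ c)).symm) := by
  have := B.comm z (eqToHom (B.p_ract z h).symm ≫ c) h
  simpa using this


theorem lact_congr {z z' : X} (hz : z = z') {y y' : C} (hy : y = y')
    {g : B.p z ⟶ y} {g' : B.p z' ⟶ y'}
    (hg : g = eqToHom (congrArg B.p hz) ≫ g' ≫ eqToHom hy.symm) :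
    B.lact z g = B.lact z' g' := by
  subst hz; subst hy; simp only [eqToHom_refl, Category.comp_id, Category.id_comp] at hg
  rw [hg]

theorem ract_congr {z z' : X} (hz : z = z') {x x' : D} (hx : x = x')
    {h : x ⟶ B.q z} {h' : x' ⟶ B.q z'}
    (hh : h = eqToHom hx ≫ h' ≫ eqToHom (congrArg B.q hz).symm) :
    B.ract z h = B.ract z' h' := by
  subst hz; subst hx; simp only [eqToHom_refl, Category.comp_id, Category.id_comp] at hh
  rw [hh]

end Bibundle

end Helpers


section Equiv

variable (B1 : Bibundle G H Q) (B2 : Bibundle H K Q')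

theorem diagRel_refl (w : FibProd B1 B2) : diagRel B1 B2 w w := by
  obtain ⟨⟨z1, z2⟩, hw⟩ := w
  refine ⟨B1.q z1, 𝟙 _, ?_⟩
  simp [Prod.ext_iff, Groupoid.inv_eq_inv, B1.ract_id, B2.lact_eqToHom]

theorem diagRel_symm {w w' : FibProd B1 B2} (hr : diagRel B1 B2 w w') :
    diagRel B1 B2 w' w := by
  obtain ⟨⟨z1, z2⟩, hw⟩ := w
  obtain ⟨⟨a, b⟩, hw'⟩ := w'
  obtain ⟨x, h, hval⟩ := hr
  simp only [Prod.mk.injEq] at hval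
  obtain ⟨rfl, rfl⟩ := hval
  refine ⟨B1.q z1, Groupoid.inv h ≫ eqToHom (B1.q_ract z1 h).symm, ?_⟩
  simp [Prod.ext_iff, Groupoid.inv_eq_inv, B1.ract_ract, B1.ract_id,
    B2.lact_lact, B2.lact_eqToHom]

theorem diagRel_trans {w w' w'' : FibProd B1 B2} (h1 : diagRel B1 B2 w w')
    (h2 : diagRel B1 B2 w' w'') : diagRel B1 B2 w w'' := by
  obtain ⟨⟨z1, z2⟩, hw⟩ := w
  obtain ⟨⟨a, b⟩, hw'⟩ := w'
  obtain ⟨⟨c, d⟩, hw''⟩ := w''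
  obtain ⟨x, h, hval⟩ := h1
  simp only [Prod.mk.injEq] at hval
  obtain ⟨rfl, rfl⟩ := hval
  obtain ⟨x2, k, hval2⟩ := h2
  simp only [Prod.mk.injEq] at hval2
  obtain ⟨rfl, rfl⟩ := hval2
  refine ⟨x2, (k ≫ eqToHom (B1.q_ract z1 h)) ≫ h, ?_⟩
  simp [Prod.ext_iff, Groupoid.inv_eq_inv, B1.ract_ract, B2.lact_lact]

theorem diagRel_equivalence : Equivalence (diagRel B1 B2) :=
  ⟨diagRel_refl B1 B2, diagRel_symm B1 B2, diagRel_trans B1 B2⟩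

theorem diagRel_of_mk_eq {w w' : FibProd B1 B2}
    (h : Quot.mk (diagRel B1 B2) w = Quot.mk (diagRel B1 B2) w') : diagRel B1 B2 w w' :=
  ((diagRel_equivalence B1 B2).eqvGen_iff).mp (Quot.eq.mp h)

end Equiv


section Construct

variable (B1 : Bibundle G H Q) (B2 : Bibundle H K Q')

/-- moment map to `G` on the quotient -/
def qp : Quot (diagRel B1 B2) → G :=
  Quot.lift (fun w => B1.p w.val.1) (by
    rintro w w' ⟨x, h, hval⟩
    rw [hval]
    exact (B1.p_ract _ _).symm)

/-- moment map to `K` on the quotient -/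
def qq : Quot (diagRel B1 B2) → K :=
  Quot.lift (fun w => B2.q w.val.2) (by
    rintro w w' ⟨x, h, hval⟩
    rw [hval]
    exact (B2.q_lact _ _).symm)

@[simp] theorem qp_mk (w : FibProd B1 B2) : qp B1 B2 (Quot.mk _ w) = B1.p w.val.1 := rfl

@[simp] theorem qq_mk (w : FibProd B1 B2) : qq B1 B2 (Quot.mk _ w) = B2.q w.val.2 := rfl

/-- the element of the fibre product obtained by acting by `g` on the left -/
def lmove (w : FibProd B1 B2) {y : G} (g : B1.p w.val.1 ⟶ y) : FibProd B1 B2 :=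
  ⟨(B1.lact w.val.1 g, w.val.2), (B1.q_lact w.val.1 g).trans w.prop⟩

/-- the element of the fibre product obtained by acting by `k` on the right -/
def rmove (w : FibProd B1 B2) {x : K} (k : x ⟶ B2.q w.val.2) : FibProd B1 B2 :=
  ⟨(w.val.1, B2.ract w.val.2 k), w.prop.trans (B2.p_ract w.val.2 k).symm⟩

theorem lmove_sound (w w' : FibProd B1 B2) (hr : diagRel B1 B2 w w')
    {a y : G} (e : a = B1.p w.val.1) (e' : a = B1.p w'.val.1) (g : a ⟶ y) :
    Quot.mk (diagRel B1 B2) (lmove B1 B2 w (eqToHom e.symm ≫ g))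
      = Quot.mk (diagRel B1 B2) (lmove B1 B2 w' (eqToHom e'.symm ≫ g)) := by
  obtain ⟨⟨z1, z2⟩, hw⟩ := w
  obtain ⟨⟨c, d⟩, hw'⟩ := w'
  obtain ⟨x, h, hval⟩ := hr
  simp only [Prod.mk.injEq] at hval
  obtain ⟨rfl, rfl⟩ := hval
  apply Quot.sound
  refine ⟨x, h ≫ eqToHom (B1.q_lact z1 (eqToHom e.symm ≫ g)).symm, ?_⟩
  simp only [lmove]
  refine Prod.ext ?_ ?_
  · show B1.lact (B1.ract z1 h) (eqToHom e'.symm ≫ g) = _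
    rw [B1.comm' z1 h (eqToHom e'.symm ≫ g)]
    apply B1.ract_congr (B1.lact_congr rfl rfl (by simp)) rfl
    simp
  · show B2.lact z2 _ = B2.lact z2 _
    apply B2.lact_congr rfl rfl
    simp [Groupoid.inv_eq_inv]
    exact (eqToHom_trans _ _).symm

theorem rmove_sound (w w' : FibProd B1 B2) (hr : diagRel B1 B2 w w')
    {a x : K} (e : a = B2.q w.val.2) (e' : a = B2.q w'.val.2) (k : x ⟶ a) :
    Quot.mk (diagRel B1 B2) (rmove B1 B2 w (k ≫ eqToHom e))
      = Quot.mk (diagRel B1 B2) (rmove B1 B2 w' (k ≫ eqToHom e')) := by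
  obtain ⟨⟨z1, z2⟩, hw⟩ := w
  obtain ⟨⟨c, d⟩, hw'⟩ := w'
  obtain ⟨x0, h, hval⟩ := hr
  simp only [Prod.mk.injEq] at hval
  obtain ⟨rfl, rfl⟩ := hval
  apply Quot.sound
  refine ⟨x0, h, ?_⟩
  simp only [rmove]
  refine Prod.ext ?_ ?_
  · rfl
  · show B2.ract (B2.lact z2 _) (k ≫ eqToHom e') = B2.lact (B2.ract z2 (k ≫ eqToHom e)) _
    rw [B2.comm' z2 (k ≫ eqToHom e)]
    refine (B2.ract_congr (B2.lact_congr rfl rfl ?_) rfl ?_).symm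
    · simp [Groupoid.inv_eq_inv]
      exact eqToHom_trans _ _
    · simp

/-- left `G`-action on the quotient -/
noncomputable def qlact (u : Quot (diagRel B1 B2)) {y : G} (g : qp B1 B2 u ⟶ y) : Quot (diagRel B1 B2) :=
  Quot.lift
    (fun w => fun (a y : G) (g : a ⟶ y) =>
      @dite _ (a = B1.p w.val.1) (Classical.dec _)
        (fun e => Quot.mk _ (lmove B1 B2 w (eqToHom e.symm ≫ g)))
        (fun _ => Quot.mk _ w))
    (by
      intro w w' hr
      funext a y g
      by_cases e : a = B1.p w.val.1
      · have e' : a = B1.p w'.val.1 := by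
          obtain ⟨x, h, hval⟩ := hr
          rw [hval]
          exact e.trans (B1.p_ract _ _).symm
        rw [dif_pos e, dif_pos e']
        exact lmove_sound B1 B2 w w' hr e e' g
      · have e' : ¬ a = B1.p w'.val.1 := by
          obtain ⟨x, h, hval⟩ := hr
          rw [hval]
          intro hc
          exact e (hc.trans (B1.p_ract _ _))
        rw [dif_neg e, dif_neg e']
        exact Quot.sound hr)
    u (qp B1 B2 u) y g

/-- right `K`-action on the quotient -/
noncomputable def qract (u : Quot (diagRel B1 B2)) {x : K} (k : x ⟶ qq B1 B2 u) : Quot (diagRel B1 B2) :=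
  Quot.lift
    (fun w => fun (x a : K) (k : x ⟶ a) =>
      @dite _ (a = B2.q w.val.2) (Classical.dec _)
        (fun e => Quot.mk _ (rmove B1 B2 w (k ≫ eqToHom e)))
        (fun _ => Quot.mk _ w))
    (by
      intro w w' hr
      funext x a k
      by_cases e : a = B2.q w.val.2
      · have e' : a = B2.q w'.val.2 := by
          obtain ⟨x0, h, hval⟩ := hr
          rw [hval]
          exact e.trans (B2.q_lact _ _).symm
        rw [dif_pos e, dif_pos e']
        exact rmove_sound B1 B2 w w' hr e e' k
      · have e' : ¬ a = B2.q w'.val.2 := by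
          obtain ⟨x0, h, hval⟩ := hr
          rw [hval]
          intro hc
          exact e (hc.trans (B2.q_lact _ _))
        rw [dif_neg e, dif_neg e']
        exact Quot.sound hr)
    u x (qq B1 B2 u) k

theorem qlact_mk (w : FibProd B1 B2) {y : G} (g : B1.p w.val.1 ⟶ y) :
    qlact B1 B2 (Quot.mk _ w) g = Quot.mk _ (lmove B1 B2 w g) := by
  show (@dite _ (B1.p w.val.1 = B1.p w.val.1) (Classical.dec _)
      (fun e => Quot.mk _ (lmove B1 B2 w (eqToHom e.symm ≫ g)))
      (fun _ => Quot.mk _ w)) = _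
  rw [dif_pos rfl]
  simp [lmove]

theorem qract_mk (w : FibProd B1 B2) {x : K} (k : x ⟶ B2.q w.val.2) :
    qract B1 B2 (Quot.mk _ w) k = Quot.mk _ (rmove B1 B2 w k) := by
  show (@dite _ (B2.q w.val.2 = B2.q w.val.2) (Classical.dec _)
      (fun e => Quot.mk _ (rmove B1 B2 w (k ≫ eqToHom e)))
      (fun _ => Quot.mk _ w)) = _
  rw [dif_pos rfl]
  simp [rmove]

theorem qlact_congr {u u' : Quot (diagRel B1 B2)} (hu : u = u') {y y' : G} (hy : y = y')
    {g : qp B1 B2 u ⟶ y} {g' : qp B1 B2 u' ⟶ y'}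
    (hg : g = eqToHom (congrArg (qp B1 B2) hu) ≫ g' ≫ eqToHom hy.symm) :
    qlact B1 B2 u g = qlact B1 B2 u' g' := by
  subst hu; subst hy
  simp only [eqToHom_refl, Category.comp_id, Category.id_comp] at hg
  rw [hg]

theorem qract_congr {u u' : Quot (diagRel B1 B2)} (hu : u = u') {x x' : K} (hx : x = x')
    {k : x ⟶ qq B1 B2 u} {k' : x' ⟶ qq B1 B2 u'}
    (hk : k = eqToHom hx ≫ k' ≫ eqToHom (congrArg (qq B1 B2) hu).symm) :
    qract B1 B2 u k = qract B1 B2 u' k' := by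
  subst hu; subst hx
  simp only [eqToHom_refl, Category.comp_id, Category.id_comp] at hk
  rw [hk]

theorem qp_qlact : ∀ (z : Quot (diagRel B1 B2)) {y : G} (g : qp B1 B2 z ⟶ y),
    qp B1 B2 (qlact B1 B2 z g) = y := by
  refine Quot.ind ?_
  intro w y g
  erw [qlact_mk]
  exact B1.p_lact _ _

theorem qq_qlact : ∀ (z : Quot (diagRel B1 B2)) {y : G} (g : qp B1 B2 z ⟶ y),
    qq B1 B2 (qlact B1 B2 z g) = qq B1 B2 z := by
  refine Quot.ind ?_
  intro w y g
  erw [qlact_mk]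
  rfl

theorem qq_qract : ∀ (z : Quot (diagRel B1 B2)) {x : K} (k : x ⟶ qq B1 B2 z),
    qq B1 B2 (qract B1 B2 z k) = x := by
  refine Quot.ind ?_
  intro w x k
  erw [qract_mk]
  exact B2.q_ract _ _

theorem qp_qract : ∀ (z : Quot (diagRel B1 B2)) {x : K} (k : x ⟶ qq B1 B2 z),
    qp B1 B2 (qract B1 B2 z k) = qp B1 B2 z := by
  refine Quot.ind ?_
  intro w x k
  erw [qract_mk]
  rfl

theorem qlact_id : ∀ z : Quot (diagRel B1 B2), qlact B1 B2 z (𝟙 (qp B1 B2 z)) = z := by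
  refine Quot.ind ?_
  intro w
  erw [qlact_mk]
  exact congrArg _ (Subtype.ext (Prod.ext (B1.lact_id _) rfl))

theorem qract_id : ∀ z : Quot (diagRel B1 B2), qract B1 B2 z (𝟙 (qq B1 B2 z)) = z := by
  refine Quot.ind ?_
  intro w
  erw [qract_mk]
  exact congrArg _ (Subtype.ext (Prod.ext rfl (B2.ract_id _)))

theorem qlact_comp : ∀ (z : Quot (diagRel B1 B2)) {y y' : G} (g : qp B1 B2 z ⟶ y)
    (g' : y ⟶ y'),
    qlact B1 B2 (qlact B1 B2 z g) (eqToHom (qp_qlact B1 B2 z g) ≫ g')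
      = qlact B1 B2 z (g ≫ g') := by
  refine Quot.ind ?_
  intro w y y' g g'
  have step : qlact B1 B2 (qlact B1 B2 (Quot.mk _ w) g) (eqToHom (qp_qlact B1 B2 _ g) ≫ g')
      = qlact B1 B2 (Quot.mk _ (lmove B1 B2 w g)) (eqToHom (B1.p_lact w.val.1 g) ≫ g') :=
    qlact_congr B1 B2 (qlact_mk B1 B2 w g) rfl (by simp; exact (eqToHom_trans_assoc _ _ _).symm)
  erw [step, qlact_mk, qlact_mk]
  exact congrArg _ (Subtype.ext (Prod.ext (B1.lact_comp w.val.1 g g') rfl))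

theorem qract_comp : ∀ (z : Quot (diagRel B1 B2)) {x x' : K} (k : x ⟶ qq B1 B2 z)
    (k' : x' ⟶ x),
    qract B1 B2 (qract B1 B2 z k) (k' ≫ eqToHom (qq_qract B1 B2 z k).symm)
      = qract B1 B2 z (k' ≫ k) := by
  refine Quot.ind ?_
  intro w x x' k k'
  have step : qract B1 B2 (qract B1 B2 (Quot.mk _ w) k) (k' ≫ eqToHom (qq_qract B1 B2 _ k).symm)
      = qract B1 B2 (Quot.mk _ (rmove B1 B2 w k)) (k' ≫ eqToHom (B2.q_ract w.val.2 k).symm) :=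
    qract_congr B1 B2 (qract_mk B1 B2 w k) rfl (by simp; exact congrArg (k' ≫ ·) (eqToHom_trans _ _).symm)
  erw [step, qract_mk, qract_mk]
  exact congrArg _ (Subtype.ext (Prod.ext rfl (B2.ract_comp w.val.2 k k')))

theorem qcomm : ∀ (z : Quot (diagRel B1 B2)) {y : G} (g : qp B1 B2 z ⟶ y) {x : K}
    (k : x ⟶ qq B1 B2 z),
    qlact B1 B2 (qract B1 B2 z k) (eqToHom (qp_qract B1 B2 z k) ≫ g)
      = qract B1 B2 (qlact B1 B2 z g) (k ≫ eqToHom (qq_qlact B1 B2 z g).symm) := by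
  refine Quot.ind ?_
  intro w y g x k
  have step1 : qlact B1 B2 (qract B1 B2 (Quot.mk _ w) k) (eqToHom (qp_qract B1 B2 _ k) ≫ g)
      = qlact B1 B2 (Quot.mk _ (rmove B1 B2 w k)) g :=
    qlact_congr B1 B2 (qract_mk B1 B2 w k) rfl (by simp; exact congrArg (eqToHom (congrArg (qp B1 B2) (qract_mk B1 B2 w k)) ≫ ·) (Category.comp_id g).symm)
  have step2 : qract B1 B2 (qlact B1 B2 (Quot.mk _ w) g) (k ≫ eqToHom (qq_qlact B1 B2 _ g).symm)
      = qract B1 B2 (Quot.mk _ (lmove B1 B2 w g)) k :=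
    qract_congr B1 B2 (qlact_mk B1 B2 w g) rfl (by simp; rfl)
  erw [step1, step2, qlact_mk, qract_mk]
  rfl

theorem qp_surj : Function.Surjective (qp B1 B2) := by
  intro y
  obtain ⟨z1, hz1⟩ := B1.p_surj y
  obtain ⟨z2, hz2⟩ := B2.p_surj (B1.q z1)
  exact ⟨Quot.mk _ ⟨(z1, z2), hz2.symm⟩, hz1⟩

theorem qq_surj : Function.Surjective (qq B1 B2) := by
  intro x
  obtain ⟨z2, hz2⟩ := B2.q_surj x
  obtain ⟨z1, hz1⟩ := B1.q_surj (B2.p z2)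
  exact ⟨Quot.mk _ ⟨(z1, z2), hz1⟩, hz2⟩

theorem qlfree : ∀ (z : Quot (diagRel B1 B2)) {y : G} (g g' : qp B1 B2 z ⟶ y),
    qlact B1 B2 z g = qlact B1 B2 z g' → g = g' := by
  refine Quot.ind ?_
  intro w y g g' hgg
  erw [qlact_mk, qlact_mk] at hgg
  obtain ⟨x, h, hval⟩ := diagRel_of_mk_eq B1 B2 hgg
  have hval1 : B1.lact w.val.1 g' = B1.ract (B1.lact w.val.1 g) h := congrArg Prod.fst hval
  have hval2 : w.val.2 = B2.lact w.val.2
      (eqToHom ((B1.q_lact w.val.1 g).trans w.prop).symm ≫ Groupoid.inv h) :=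
    congrArg Prod.snd hval
  have e : B2.p w.val.2 = x := (congrArg B2.p hval2).trans (B2.p_lact _ _)
  have hfree : eqToHom ((B1.q_lact w.val.1 g).trans w.prop).symm ≫ Groupoid.inv h
      = eqToHom e :=
    B2.lfree w.val.2 _ _ (hval2.symm.trans (B2.lact_eqToHom _ e).symm)
  have ex : x = B1.q (B1.lact w.val.1 g) :=
    e.symm.trans ((B1.q_lact w.val.1 g).trans w.prop).symm
  have h1 : Groupoid.inv h = eqToHom ex.symm := by
    calc (Groupoid.inv h : B1.q (B1.lact w.val.1 g) ⟶ x)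
        = eqToHom ((B1.q_lact w.val.1 g).trans w.prop)
            ≫ (eqToHom ((B1.q_lact w.val.1 g).trans w.prop).symm ≫ Groupoid.inv h) := by simp
      _ = eqToHom ((B1.q_lact w.val.1 g).trans w.prop) ≫ eqToHom e := by rw [hfree]
      _ = eqToHom ex.symm := by simp
  have hh : h = eqToHom ex := by
    refine (IsIso.eq_inv_of_hom_inv_id (Groupoid.inv_comp h)).trans (IsIso.inv_eq_of_hom_inv_id ?_)
    rw [h1]
    exact (eqToHom_trans _ _).trans (eqToHom_refl _ _)
  apply B1.lfree w.val.1 g g'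
  rw [hval1, hh]
  exact (B1.ract_eqToHom _ ex).symm

theorem qrfree : ∀ (z : Quot (diagRel B1 B2)) {x : K} (k k' : x ⟶ qq B1 B2 z),
    qract B1 B2 z k = qract B1 B2 z k' → k = k' := by
  refine Quot.ind ?_
  intro w x k k' hkk
  erw [qract_mk, qract_mk] at hkk
  obtain ⟨x0, h, hval⟩ := diagRel_of_mk_eq B1 B2 hkk
  have hval1 : w.val.1 = B1.ract w.val.1 h := congrArg Prod.fst hval
  have hval2 : B2.ract w.val.2 k' = B2.lact (B2.ract w.val.2 k)
      (eqToHom (w.prop.trans (B2.p_ract w.val.2 k).symm).symm ≫ Groupoid.inv h) :=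
    congrArg Prod.snd hval
  have e : x0 = B1.q w.val.1 := ((congrArg B1.q hval1).trans (B1.q_ract _ _)).symm
  have hfree : h = eqToHom e :=
    B1.rfree w.val.1 h (eqToHom e) (hval1.symm.trans (B1.ract_eqToHom _ e).symm)
  rw [hfree] at hval2
  have hkk' : B2.ract w.val.2 k' = B2.ract w.val.2 k := by
    rw [hval2]
    simp [Groupoid.inv_eq_inv, B2.lact_eqToHom]
  exact (B2.rfree w.val.2 k' k hkk').symm

theorem qltrans : ∀ z z' : Quot (diagRel B1 B2), qq B1 B2 z = qq B1 B2 z' →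
    ∃ g : qp B1 B2 z ⟶ qp B1 B2 z', qlact B1 B2 z g = z' := by
  refine Quot.ind ?_
  intro w
  refine Quot.ind ?_
  intro w' hqq
  obtain ⟨⟨z1, z2⟩, hw⟩ := w
  obtain ⟨⟨z1', z2'⟩, hw'⟩ := w'
  obtain ⟨η, hη⟩ := B2.ltrans z2 z2' hqq
  obtain ⟨g', hg'⟩ := B1.ltrans
    (B1.ract z1 (Groupoid.inv (eqToHom hw ≫ η ≫ eqToHom hw'.symm))) z1'
    (B1.q_ract z1 _)
  refine ⟨eqToHom (B1.p_ract z1 (Groupoid.inv (eqToHom hw ≫ η ≫ eqToHom hw'.symm))).symm ≫ g',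
    ?_⟩
  erw [qlact_mk]
  apply Quot.sound
  refine ⟨B1.q z1', Groupoid.inv (eqToHom hw ≫ η ≫ eqToHom hw'.symm)
    ≫ eqToHom (B1.q_lact z1
      (eqToHom (B1.p_ract z1 (Groupoid.inv (eqToHom hw ≫ η ≫ eqToHom hw'.symm))).symm
        ≫ g')).symm, ?_⟩
  refine Prod.ext ?_ ?_
  · exact hg'.symm.trans
      (B1.comm' z1 (Groupoid.inv (eqToHom hw ≫ η ≫ eqToHom hw'.symm)) g')
  · have key : B2.lact z2 (η ≫ eqToHom hw'.symm) = z2' := by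
      calc B2.lact z2 (η ≫ eqToHom hw'.symm)
          = B2.lact (B2.lact z2 η) (eqToHom (B2.p_lact z2 η) ≫ eqToHom hw'.symm) :=
            (B2.lact_comp z2 η (eqToHom hw'.symm)).symm
        _ = B2.lact z2' (eqToHom hw'.symm) := B2.lact_congr hη rfl (by simp)
        _ = z2' := B2.lact_eqToHom z2' hw'.symm
    refine Eq.symm ((B2.lact_congr rfl rfl ?_).trans key)
    simp [Groupoid.inv_eq_inv]
    erw [inv_eqToHom, eqToHom_trans_assoc, eqToHom_trans_assoc, Category.comp_id]
    exact (congrArg (· ≫ η ≫ eqToHom hw'.symm) (eqToHom_refl _ _)).trans (Category.id_comp _)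

theorem qrtrans : ∀ z z' : Quot (diagRel B1 B2), qp B1 B2 z = qp B1 B2 z' →
    ∃ k : qq B1 B2 z' ⟶ qq B1 B2 z, qract B1 B2 z k = z' := by
  refine Quot.ind ?_
  intro w
  refine Quot.ind ?_
  intro w' hpp
  obtain ⟨⟨z1, z2⟩, hw⟩ := w
  obtain ⟨⟨z1', z2'⟩, hw'⟩ := w'
  obtain ⟨h, hh⟩ := B1.rtrans z1 z1' hpp
  obtain ⟨k', hk'⟩ := B2.rtrans (B2.lact z2 (eqToHom hw.symm ≫ Groupoid.inv h)) z2'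
    ((B2.p_lact z2 _).trans hw')
  refine ⟨k' ≫ eqToHom (B2.q_lact z2 (eqToHom hw.symm ≫ Groupoid.inv h)), ?_⟩
  erw [qract_mk]
  apply Quot.sound
  refine ⟨B1.q z1', h, ?_⟩
  refine Prod.ext ?_ ?_
  · exact hh.symm
  · have key : B2.lact (B2.ract z2
        (k' ≫ eqToHom (B2.q_lact z2 (eqToHom hw.symm ≫ Groupoid.inv h))))
        (eqToHom (B2.p_ract z2
          (k' ≫ eqToHom (B2.q_lact z2 (eqToHom hw.symm ≫ Groupoid.inv h))))
          ≫ eqToHom hw.symm ≫ Groupoid.inv h) = z2' := by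
      rw [B2.comm' z2 (k' ≫ eqToHom (B2.q_lact z2 (eqToHom hw.symm ≫ Groupoid.inv h)))]
      refine Eq.trans ?_ hk'
      refine B2.ract_congr (B2.lact_congr rfl rfl ?_) rfl ?_
      · simp
      · simp
    refine Eq.symm ((B2.lact_congr rfl rfl ?_).trans key)
    simp
    erw [Category.comp_id]
    exact congrArg (eqToHom _ ≫ ·) (Groupoid.inv_eq_inv h)

/-- the composite bibundle structure on the quotient -/
noncomputable def QB : Bibundle G K (Quot (diagRel B1 B2)) where
  p := qp B1 B2
  q := qq B1 B2
  lact := qlact B1 B2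
  ract := qract B1 B2
  p_lact := qp_qlact B1 B2
  q_lact := qq_qlact B1 B2
  lact_id := qlact_id B1 B2
  lact_comp := qlact_comp B1 B2
  q_ract := qq_qract B1 B2
  p_ract := qp_qract B1 B2
  ract_id := qract_id B1 B2
  ract_comp := qract_comp B1 B2
  comm := qcomm B1 B2
  p_surj := qp_surj B1 B2
  q_surj := qq_surj B1 B2
  lfree := qlfree B1 B2
  ltrans := qltrans B1 B2
  rfree := qrfree B1 B2
  rtrans := qrtrans B1 B2

end Construct

/-- The quotient `(Q ×_{H⁰} Q')/H` of the fibre product of a bi-principal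
`(G,H)`-bibundle and a bi-principal `(H,K)`-bibundle by the diagonal `H`-action, with the
induced `G`- and `K`-actions, is a bi-principal `(G,K)`-bibundle. -/
theorem bibundle_composition (B1 : Bibundle G H Q) (B2 : Bibundle H K Q') :
    ∃ B : Bibundle G K (Quot (diagRel B1 B2)),
      ∃ (hp : ∀ w : FibProd B1 B2, B.p (Quot.mk (diagRel B1 B2) w) = B1.p w.val.1)
        (hq : ∀ w : FibProd B1 B2, B.q (Quot.mk (diagRel B1 B2) w) = B2.q w.val.2),
        (∀ (w : FibProd B1 B2) {y : G} (g : B1.p w.val.1 ⟶ y),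
          B.lact (Quot.mk (diagRel B1 B2) w) (eqToHom (hp w) ≫ g)
            = Quot.mk (diagRel B1 B2)
                ⟨(B1.lact w.val.1 g, w.val.2), (B1.q_lact w.val.1 g).trans w.prop⟩) ∧
        (∀ (w : FibProd B1 B2) {x : K} (k : x ⟶ B2.q w.val.2),
          B.ract (Quot.mk (diagRel B1 B2) w) (k ≫ eqToHom (hq w).symm)
            = Quot.mk (diagRel B1 B2)
                ⟨(w.val.1, B2.ract w.val.2 k),
                  w.prop.trans (B2.p_ract w.val.2 k).symm⟩) := by
  refine ⟨QB B1 B2, fun _ => rfl, fun _ => rfl, ?_, ?_⟩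
  · intro w y g
    exact ((qlact_congr B1 B2 rfl rfl (by simp; rfl)).trans (qlact_mk B1 B2 w g))
  · intro w x k
    exact ((qract_congr B1 B2 rfl rfl (by simp; rfl)).trans (qract_mk B1 B2 w k))
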